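/- The smoothed hinge loss g_σ(h_k, y_k, ·): ℝⁿ → ℝ has gradient that is Lipschitz continuous with constant ‖h_k h_kᵀ‖₂/(σ‖h_k‖_∞), where ‖·‖₂ denotes the spectral norm; consequently the sum over N' samples has a gradient that is Lipschitz with constant (N'/σ)·max_k ‖h_k h_kᵀ‖₂/‖h_k‖_∞. -/

import Mathlib

/-!
Writing `c = σ‖h‖∞` and `s = y (1 - θᵀh)`, the loss is `smoothHinge c s`, which equals
`((min s 0)² - (min (s + c) 0)²) / (2c)`. Its derivative is therefore `s / c` clamped to `[-1, 0]`,
a `1/c`-Lipschitz function of `s`. Since `s` is affine in `θ` with gradient `-y h` and `|y| = 1`,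
the gradient of the loss in `θ` is Lipschitz with constant `‖h‖² / c`, and `‖h‖²` is the operator
norm of the rank-one map `x ↦ ⟪h, x⟫ h`. The bound for the sum adds up the `N'` constants.
-/

open scoped InnerProductSpace

noncomputable def smoothHinge (c s : ℝ) : ℝ :=
  if s > 0 then 0 else if s < -c then -s - c / 2 else s ^ 2 / (2 * c)

noncomputable def smoothHingeDeriv (c s : ℝ) : ℝ := max (min s 0) (-c) / c

theorem hasDerivAt_min_zero_sq (t : ℝ) :
    HasDerivAt (fun s : ℝ => min s 0 ^ 2) (2 * min t 0) t := by
  refine hasDerivAt_of_hasDerivAt_of_ne' (f := fun s : ℝ => min s 0 ^ 2) (g := fun s => 2 * min s 0)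
    (x := 0) (fun s hs => ?_) (by fun_prop) (by fun_prop) t
  rcases hs.lt_or_gt with hs | hs
  · have hloc : (fun u : ℝ => min u 0 ^ 2) =ᶠ[nhds s] fun u => u ^ 2 := by
      filter_upwards [eventually_lt_nhds hs] with u hu
      rw [min_eq_left hu.le]
    simpa [min_eq_left hs.le] using (hasDerivAt_pow 2 s).congr_of_eventuallyEq hloc
  · have hloc : (fun u : ℝ => min u 0 ^ 2) =ᶠ[nhds s] fun _ => 0 := by
      filter_upwards [eventually_gt_nhds hs] with u hu
      simp [min_eq_right hu.le]
    simpa [min_eq_right hs.le] using (hasDerivAt_const s (0 : ℝ)).congr_of_eventuallyEq hloc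

theorem min_sub_min_add_eq_max_min {c : ℝ} (hc : 0 ≤ c) (s : ℝ) :
    min s 0 - min (s + c) 0 = max (min s 0) (-c) := by
  rcases le_total s (-c) with h₁ | h₁ <;> rcases le_total s 0 with h₂ | h₂ <;>
    simp only [min_eq_left, min_eq_right, max_eq_left, max_eq_right, h₁, h₂] <;> grind

theorem smoothHinge_eq_sq_min_sub {c : ℝ} (hc : 0 < c) (s : ℝ) :
    smoothHinge c s = (min s 0 ^ 2 - min (s + c) 0 ^ 2) / (2 * c) := by
  unfold smoothHinge
  split_ifs with h₁ h₂
  · simp [min_eq_right h₁.le, min_eq_right (by linarith : 0 ≤ s + c)]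
  · rw [min_eq_left (not_lt.mp h₁), min_eq_left (by linarith)]
    field_simp
    ring
  · rw [min_eq_left (not_lt.mp h₁), min_eq_right (by linarith)]
    ring

theorem hasDerivAt_smoothHinge {c : ℝ} (hc : 0 < c) (s : ℝ) :
    HasDerivAt (smoothHinge c) (smoothHingeDeriv c s) s := by
  have hdiff := ((hasDerivAt_min_zero_sq s).sub
    (hasDerivAt_min_zero_sq (s + c)).comp_add_const).div_const (2 * c)
  rw [funext (smoothHinge_eq_sq_min_sub hc), smoothHingeDeriv,
    ← min_sub_min_add_eq_max_min hc.le]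
  refine hdiff.congr_deriv ?_
  field_simp

theorem abs_smoothHingeDeriv_sub_le {c : ℝ} (hc : 0 < c) (s t : ℝ) :
    |smoothHingeDeriv c s - smoothHingeDeriv c t| ≤ c⁻¹ * |s - t| := by
  rw [smoothHingeDeriv, smoothHingeDeriv, ← sub_div, abs_div, abs_of_pos hc, div_eq_inv_mul]
  refine mul_le_mul_of_nonneg_left ?_ (inv_nonneg.2 hc.le)
  exact (abs_max_sub_max_le_abs _ _ _).trans (by simpa using abs_min_sub_min_le_max s 0 t 0)

section Ridge

variable {E : Type*} [NormedAddCommGroup E] [InnerProductSpace ℝ E]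

theorem differentiable_smoothHinge_margin {c : ℝ} (hc : 0 < c) (y : ℝ) (h : E) :
    Differentiable ℝ fun θ => smoothHinge c (y * (1 - ⟪h, θ⟫_ℝ)) := fun θ =>
  (hasDerivAt_smoothHinge hc _).differentiableAt.comp θ
    ((((differentiableAt_const h).inner ℝ differentiableAt_id).const_sub 1).const_mul y)

variable [CompleteSpace E]

theorem HasDerivAt.hasGradientAt_comp_affine_inner {φ : ℝ → ℝ} {φ' a : ℝ} {b θ : E}
    (hφ : HasDerivAt φ φ' (a + ⟪b, θ⟫_ℝ)) :
    HasGradientAt (fun x => φ (a + ⟪b, x⟫_ℝ)) (φ' • b) θ := by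
  have hinner : HasFDerivAt (fun x => a + ⟪b, x⟫_ℝ) (innerSL ℝ b) θ :=
    (innerSL ℝ b).hasFDerivAt.const_add a
  rw [hasGradientAt_iff_hasFDerivAt, map_smul]
  exact hφ.comp_hasFDerivAt θ hinner

theorem norm_gradient_comp_affine_inner_sub_le {φ φ' : ℝ → ℝ} (hφ : ∀ s, HasDerivAt φ (φ' s) s)
    {L : ℝ} (hL : ∀ s t, |φ' s - φ' t| ≤ L * |s - t|) (a : ℝ) (b θ₁ θ₂ : E) :
    ‖gradient (fun x => φ (a + ⟪b, x⟫_ℝ)) θ₁ - gradient (fun x => φ (a + ⟪b, x⟫_ℝ)) θ₂‖ ≤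
      L * ‖b‖ ^ 2 * ‖θ₁ - θ₂‖ := by
  have hL₀ : 0 ≤ L := by simpa using (abs_nonneg _).trans (hL 1 0)
  rw [(hφ _).hasGradientAt_comp_affine_inner.gradient,
    (hφ _).hasGradientAt_comp_affine_inner.gradient, ← sub_smul, norm_smul, Real.norm_eq_abs]
  calc |φ' (a + ⟪b, θ₁⟫_ℝ) - φ' (a + ⟪b, θ₂⟫_ℝ)| * ‖b‖
      ≤ L * |⟪b, θ₁ - θ₂⟫_ℝ| * ‖b‖ := by
        gcongr
        simpa [inner_sub_right] using hL (a + ⟪b, θ₁⟫_ℝ) (a + ⟪b, θ₂⟫_ℝ)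
    _ ≤ L * (‖b‖ * ‖θ₁ - θ₂‖) * ‖b‖ := by gcongr; exact abs_real_inner_le_norm _ _
    _ = L * ‖b‖ ^ 2 * ‖θ₁ - θ₂‖ := by ring

theorem norm_gradient_sum_sub_le {ι : Type*} [Fintype ι] {f : ι → E → ℝ}
    (hf : ∀ k, Differentiable ℝ (f k)) {L : ι → ℝ}
    (hL : ∀ k θ₁ θ₂, ‖gradient (f k) θ₁ - gradient (f k) θ₂‖ ≤ L k * ‖θ₁ - θ₂‖) (θ₁ θ₂ : E) :
    ‖gradient (fun θ => ∑ k, f k θ) θ₁ - gradient (fun θ => ∑ k, f k θ) θ₂‖ ≤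
      (∑ k, L k) * ‖θ₁ - θ₂‖ := by
  have hsum : ∀ θ, HasGradientAt (fun θ => ∑ k, f k θ) (∑ k, gradient (f k) θ) θ := fun θ => by
    rw [hasGradientAt_iff_hasFDerivAt, map_sum]
    exact HasFDerivAt.fun_sum fun k _ => ((hf k θ).hasGradientAt).hasFDerivAt
  rw [(hsum θ₁).gradient, (hsum θ₂).gradient, ← Finset.sum_sub_distrib, Finset.sum_mul]
  exact (norm_sum_le _ _).trans (Finset.sum_le_sum fun k _ => hL k θ₁ θ₂)

theorem norm_gradient_smoothHinge_margin_sub_le {c : ℝ} (hc : 0 < c) {y : ℝ} (hy : |y| = 1)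
    (h θ₁ θ₂ : E) :
    ‖gradient (fun θ => smoothHinge c (y * (1 - ⟪h, θ⟫_ℝ))) θ₁ -
        gradient (fun θ => smoothHinge c (y * (1 - ⟪h, θ⟫_ℝ))) θ₂‖ ≤
      ‖h‖ ^ 2 / c * ‖θ₁ - θ₂‖ := by
  have hmargin : ∀ θ, y * (1 - ⟪h, θ⟫_ℝ) = y + ⟪-y • h, θ⟫_ℝ := fun θ => by
    rw [real_inner_smul_left]
    ring
  have hnorm : ‖h‖ ^ 2 / c = c⁻¹ * ‖-y • h‖ ^ 2 := by
    rw [norm_smul, norm_neg, Real.norm_eq_abs, hy, one_mul, div_eq_inv_mul]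
  simp only [hmargin, hnorm]
  exact norm_gradient_comp_affine_inner_sub_le (hasDerivAt_smoothHinge hc)
    (abs_smoothHingeDeriv_sub_le hc) _ _ _ _

end Ridge

theorem EuclideanSpace.iSup_abs_pos {ι : Type*} [Finite ι] {x : EuclideanSpace ℝ ι} (hx : x ≠ 0) :
    0 < ⨆ i, |x i| := by
  obtain ⟨i, hi⟩ : ∃ i, x i ≠ 0 := by
    by_contra! hzero
    exact hx (by ext i; simpa using hzero i)
  exact (abs_pos.mpr hi).trans_le (le_ciSup (f := fun i => |x i|) (Set.finite_range _).bddAbove i)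

theorem stmt3_general {n N' : ℕ} (σ : ℝ) (hσ : 0 < σ)
    (h : Fin N' → EuclideanSpace ℝ (Fin n)) (hh : ∀ k, h k ≠ 0)
    (y : Fin N' → ℝ) (hy : ∀ k, y k = 1 ∨ y k = -1) :
    let hinf : Fin N' → ℝ := fun k => ⨆ i, |h k i|
    let z : Fin N' → EuclideanSpace ℝ (Fin n) → ℝ := fun k θ => y k * (1 - ∑ i, θ i * h k i)
    let G : Fin N' → EuclideanSpace ℝ (Fin n) → ℝ := fun k θ =>
      if z k θ > 0 then 0
      else if z k θ < -(σ * hinf k) then -z k θ - σ / 2 * hinf k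
      else (z k θ) ^ 2 / (2 * σ * hinf k)
    let spec : Fin N' → ℝ := fun k => ‖(innerSL ℝ (h k)).smulRight (h k)‖
    (∀ k (θ₁ θ₂ : EuclideanSpace ℝ (Fin n)),
      ‖gradient (G k) θ₁ - gradient (G k) θ₂‖ ≤ spec k / (σ * hinf k) * ‖θ₁ - θ₂‖) ∧
    (∀ θ₁ θ₂ : EuclideanSpace ℝ (Fin n),
      ‖gradient (fun θ => ∑ k, G k θ) θ₁ - gradient (fun θ => ∑ k, G k θ) θ₂‖ ≤
        ((N' : ℝ) / σ) * (⨆ k, spec k / hinf k) * ‖θ₁ - θ₂‖) := by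
  intro hinf z G spec
  have hc : ∀ k, 0 < σ * hinf k := fun k => mul_pos hσ (EuclideanSpace.iSup_abs_pos (hh k))
  have hG : ∀ k, G k = fun θ => smoothHinge (σ * hinf k) (y k * (1 - ⟪h k, θ⟫_ℝ)) := by
    intro k
    funext θ
    have hz : z k θ = y k * (1 - ⟪h k, θ⟫_ℝ) := by
      simp only [z, PiLp.inner_apply, Real.inner_apply, mul_comm (θ _)]
    simp only [G, smoothHinge, hz]
    split_ifs <;> ring
  have hspec : ∀ k, spec k = ‖h k‖ ^ 2 := fun k => by
    simp only [spec, ContinuousLinearMap.norm_smulRight_apply, innerSL_apply_norm, sq]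
  have hlip : ∀ k θ₁ θ₂, ‖gradient (G k) θ₁ - gradient (G k) θ₂‖ ≤
      spec k / (σ * hinf k) * ‖θ₁ - θ₂‖ := fun k θ₁ θ₂ => by
    have hy_abs : |y k| = 1 := by rcases hy k with hk | hk <;> simp [hk]
    rw [hG k, hspec k]
    exact norm_gradient_smoothHinge_margin_sub_le (hc k) hy_abs _ _ _
  have hdiff : ∀ k, Differentiable ℝ (G k) := fun k => by
    rw [hG k]
    exact differentiable_smoothHinge_margin (hc k) _ _
  have hbdd : BddAbove (Set.range fun k => spec k / hinf k) := (Set.finite_range _).bddAbove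
  refine ⟨hlip, fun θ₁ θ₂ => (norm_gradient_sum_sub_le hdiff hlip θ₁ θ₂).trans ?_⟩
  gcongr
  calc ∑ k, spec k / (σ * hinf k) ≤ ∑ _k : Fin N', (⨆ k, spec k / hinf k) / σ :=
        Finset.sum_le_sum fun k _ => by
          rw [mul_comm, ← div_div]
          exact div_le_div_of_nonneg_right (le_ciSup hbdd k) hσ.le
    _ = N' / σ * ⨆ k, spec k / hinf k := by
        rw [Finset.sum_const, Finset.card_univ, Fintype.card_fin, nsmul_eq_mul]
        ring

/-- the smoothed hinge loss has Lipschitz gradient with constant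
‖h hᵀ‖₂/(σ‖h‖∞) (spectral norm of the outer product = operator norm of x ↦ ⟪h,x⟫h),
and the sum over N' samples has Lipschitz gradient with constant
(N'/σ)·max_k ‖h_k h_kᵀ‖₂/‖h_k‖∞. -/
theorem stmt3 {n N' : ℕ} (hn : 0 < n) (hN : 0 < N') (σ : ℝ) (hσ : 0 < σ)
    (h : Fin N' → EuclideanSpace ℝ (Fin n)) (hh : ∀ k, h k ≠ 0)
    (y : Fin N' → ℝ) (hy : ∀ k, y k = 1 ∨ y k = -1) :
    let hinf : Fin N' → ℝ := fun k => ⨆ i, |h k i|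
    let z : Fin N' → EuclideanSpace ℝ (Fin n) → ℝ := fun k θ => y k * (1 - ∑ i, θ i * h k i)
    let G : Fin N' → EuclideanSpace ℝ (Fin n) → ℝ := fun k θ =>
      if z k θ > 0 then 0
      else if z k θ < -(σ * hinf k) then -z k θ - σ / 2 * hinf k
      else (z k θ) ^ 2 / (2 * σ * hinf k)
    let spec : Fin N' → ℝ := fun k => ‖(innerSL ℝ (h k)).smulRight (h k)‖
    (∀ k (θ₁ θ₂ : EuclideanSpace ℝ (Fin n)),
      ‖gradient (G k) θ₁ - gradient (G k) θ₂‖ ≤ spec k / (σ * hinf k) * ‖θ₁ - θ₂‖) ∧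
    (∀ θ₁ θ₂ : EuclideanSpace ℝ (Fin n),
      ‖gradient (fun θ => ∑ k, G k θ) θ₁ - gradient (fun θ => ∑ k, G k θ) θ₂‖ ≤
        ((N' : ℝ) / σ) * (⨆ k, spec k / hinf k) * ‖θ₁ - θ₂‖) :=
  stmt3_general σ hσ h hh y hy
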